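/- arXiv:1811.01928 — 6 statements merged into one kernel-verified Lean document; each statement's English description precedes it below -/
import Mathlib

section
/- If a matrix field τ ∈ X̂(Ê) vanishes at all four vertices of the reference square, i.e. τ(r̂ᵢ) = 0 for i = 1,2,3,4, then τ is identically zero. (Hence the vertex-value quadrature bilinear form (τ,χ) ↦ (1/4)·Σ_{i=1}^4 τ(r̂ᵢ):χ(r̂ᵢ) is an inner product on X̂(Ê).) -/
/-- The reference BDM₁ space on Ê = [0,1]²: vector fields of the form
`v(x,y) = (α₁x + β₁y + γ₁ + r x² + 2s xy, α₂x + β₂y + γ₂ − 2r xy − s y²)`. -/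
def BDM1 (v : ℝ → ℝ → ℝ × ℝ) : Prop :=
  ∃ a1 b1 c1 a2 b2 c2 r s : ℝ, ∀ x y : ℝ,
    v x y = (a1 * x + b1 * y + c1 + r * x ^ 2 + 2 * s * x * y,
             a2 * x + b2 * y + c2 - 2 * r * x * y - s * y ^ 2)

lemma BDM1_vanish (v : ℝ → ℝ → ℝ × ℝ) (hv : BDM1 v)
    (h1 : v 0 0 = 0) (h2 : v 1 0 = 0) (h3 : v 1 1 = 0) (h4 : v 0 1 = 0) :
    ∀ x y : ℝ, v x y = 0 := by
  obtain ⟨a1, b1, c1, a2, b2, c2, r, s, hv⟩ := hv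
  rw [hv 0 0, Prod.ext_iff] at h1
  rw [hv 1 0, Prod.ext_iff] at h2
  rw [hv 1 1, Prod.ext_iff] at h3
  rw [hv 0 1, Prod.ext_iff] at h4
  simp only [Prod.fst_zero, Prod.snd_zero] at h1 h2 h3 h4
  obtain ⟨h11, h12⟩ := h1
  obtain ⟨h21, h22⟩ := h2
  obtain ⟨h31, h32⟩ := h3
  obtain ⟨h41, h42⟩ := h4
  intro x y
  rw [hv x y]
  have hc1 : c1 = 0 := by linarith [h11]
  have hc2 : c2 = 0 := by linarith [h12]
  have hb1 : b1 = 0 := by nlinarith [h41]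
  have hs2 : b2 - s = 0 := by nlinarith [h42]
  have ha2 : a2 = 0 := by nlinarith [h22]
  have har : a1 + r = 0 := by nlinarith [h21]
  have hs : s = 0 := by nlinarith [h31]
  have hr : r = 0 := by nlinarith [h32]
  have ha1 : a1 = 0 := by linarith
  have hb2 : b2 = 0 := by linarith
  simp [ha1, hb1, hc1, ha2, hb2, hc2, hr, hs]


/-- If a matrix field `τ ∈ X̂(Ê)` (each row in BDM₁(Ê)) vanishes at the four
vertices of the reference square, then `τ` is identically zero. -/
theorem stmt0 (τ : ℝ → ℝ → Matrix (Fin 2) (Fin 2) ℝ)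
    (hrow : ∀ i : Fin 2, BDM1 (fun x y => (τ x y i 0, τ x y i 1)))
    (h1 : τ 0 0 = 0) (h2 : τ 1 0 = 0) (h3 : τ 1 1 = 0) (h4 : τ 0 1 = 0) :
    ∀ x y : ℝ, τ x y = 0 := by
  intro x y
  ext i j
  have key := BDM1_vanish _ (hrow i)
    (by simp [h1]) (by simp [h2]) (by simp [h3]) (by simp [h4]) x y
  have := Prod.ext_iff.mp key
  fin_cases j
  · simpa using this.1
  · simpa using this.2
end

section
/- There exist constants 0 < α₀ ≤ α₁ such that for every τ ∈ X̂(Ê): α₀ · ∫_Ê |τ(x,y)|² dx dy ≤ (1/4)·Σ_{i=1}^4 |τ(r̂ᵢ)|² ≤ α₁ · ∫_Ê |τ(x,y)|² dx dy, where |·| is the Frobenius norm. In other words, the trapezoidal (vertex) quadrature norm is equivalent to the L²(Ê) norm on X̂(Ê). -/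
set_option maxHeartbeats 1000000

/-- Squared Frobenius norm of a 2×2 matrix. -/
def frobSq (M : Matrix (Fin 2) (Fin 2) ℝ) : ℝ := ∑ i, ∑ j, (M i j) ^ 2

lemma polyint (c0 c1 c2 c3 c4 : ℝ) :
    ∫ y in (0:ℝ)..1, (c0 + c1*y + c2*y^2 + c3*y^3 + c4*y^4)
      = c0 + c1/2 + c2/3 + c3/4 + c4/5 := by
  have h : ∀ y ∈ Set.uIcc (0:ℝ) 1,
      HasDerivAt (fun t : ℝ => c0*t + c1/2*t^2 + c2/3*t^3 + c3/4*t^4 + c4/5*t^5)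
        (c0 + c1*y + c2*y^2 + c3*y^3 + c4*y^4) y := by
    intro y _
    have h1 : HasDerivAt (fun t : ℝ => c0*t + c1/2*t^2 + c2/3*t^3 + c3/4*t^4 + c4/5*t^5)
        (c0*1 + c1/2*((2:ℕ)*y^(2-1)) + c2/3*((3:ℕ)*y^(3-1)) + c3/4*((4:ℕ)*y^(4-1))
          + c4/5*((5:ℕ)*y^(5-1))) y :=
      ((((((hasDerivAt_id y).const_mul c0).add ((hasDerivAt_pow 2 y).const_mul (c1/2))).add
        ((hasDerivAt_pow 3 y).const_mul (c2/3))).add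
        ((hasDerivAt_pow 4 y).const_mul (c3/4))).add
        ((hasDerivAt_pow 5 y).const_mul (c4/5)))
    convert h1 using 1
    push_cast
    ring
  rw [intervalIntegral.integral_eq_sub_of_hasDerivAt h
    (by apply Continuous.intervalIntegrable; continuity)]
  norm_num

lemma lower8 (a1 b1 c1 a2 b2 c2 r s : ℝ) :
    (1/2:ℝ) * ((1/3:ℝ)*a1*a1 + (1/2:ℝ)*a1*b1 + (1/1:ℝ)*a1*c1 + (1/2:ℝ)*a1*r + (2/3:ℝ)*a1*s + (1/3:ℝ)*b1*b1 + (1/1:ℝ)*b1*c1 + (1/3:ℝ)*b1*r + (2/3:ℝ)*b1*s + (1/1:ℝ)*c1*c1 + (2/3:ℝ)*c1*r + (1/1:ℝ)*c1*s + (1/3:ℝ)*a2*a2 + (1/2:ℝ)*a2*b2 + (1/1:ℝ)*a2*c2 + (-2/3:ℝ)*a2*r + (-1/3:ℝ)*a2*s + (1/3:ℝ)*b2*b2 + (1/1:ℝ)*b2*c2 + (-2/3:ℝ)*b2*r + (-1/2:ℝ)*b2*s + (1/1:ℝ)*c2*c2 + (-1/1:ℝ)*c2*r + (-2/3:ℝ)*c2*s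 + (29/45:ℝ)*r*r + (1/1:ℝ)*r*s + (29/45:ℝ)*s*s) ≤ (1/4:ℝ) * ((c1)^2+(c2)^2+(a1+c1+r)^2+(a2+c2)^2+(a1+b1+c1+r+2*s)^2+(a2+b2+c2-2*r-s)^2+(b1+c1)^2+(b2+c2-s)^2) := by
  nlinarith [mul_nonneg (by norm_num : (0:ℝ) ≤ (1/3:ℝ)) (sq_nonneg ((1/1:ℝ)*a1 + (3/8:ℝ)*b1 + (3/4:ℝ)*c1 + (9/8:ℝ)*r + (1/1:ℝ)*s)),
    mul_nonneg (by norm_num : (0:ℝ) ≤ (55/192:ℝ)) (sq_nonneg ((1/1:ℝ)*b1 + (6/11:ℝ)*c1 + (1/11:ℝ)*r + (8/11:ℝ)*s)),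
    mul_nonneg (by norm_num : (0:ℝ) ≤ (5/22:ℝ)) (sq_nonneg ((1/1:ℝ)*c1 + (1/6:ℝ)*r + (-1/2:ℝ)*s)),
    mul_nonneg (by norm_num : (0:ℝ) ≤ (1/3:ℝ)) (sq_nonneg ((1/1:ℝ)*a2 + (3/8:ℝ)*b2 + (3/4:ℝ)*c2 + (-1/1:ℝ)*r + (-1/2:ℝ)*s)),
    mul_nonneg (by norm_num : (0:ℝ) ≤ (55/192:ℝ)) (sq_nonneg ((1/1:ℝ)*b2 + (6/11:ℝ)*c2 + (-8/11:ℝ)*r + (-12/11:ℝ)*s)),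
    mul_nonneg (by norm_num : (0:ℝ) ≤ (5/22:ℝ)) (sq_nonneg ((1/1:ℝ)*c2 + (1/2:ℝ)*r + (-1/6:ℝ)*s)),
    mul_nonneg (by norm_num : (0:ℝ) ≤ (37/180:ℝ)) (sq_nonneg ((1/1:ℝ)*r)),
    mul_nonneg (by norm_num : (0:ℝ) ≤ (37/180:ℝ)) (sq_nonneg ((1/1:ℝ)*s))]

lemma upper8 (a1 b1 c1 a2 b2 c2 r s : ℝ) :
    (1/4:ℝ) * ((c1)^2+(c2)^2+(a1+c1+r)^2+(a2+c2)^2+(a1+b1+c1+r+2*s)^2+(a2+b2+c2-2*r-s)^2+(b1+c1)^2+(b2+c2-s)^2) ≤ (9:ℝ) * ((1/3:ℝ)*a1*a1 + (1/2:ℝ)*a1*b1 + (1/1:ℝ)*a1*c1 + (1/2:ℝ)*a1*r + (2/3:ℝ)*a1*s + (1/3:ℝ)*b1*b1 + (1/1:ℝ)*b1*c1 + (1/3:ℝ)*b1*r + (2/3:ℝ)*b1*s + (1/1:ℝ)*c1*c1 + (2/3:ℝ)*c1*r + (1/1:ℝ)*c1*s + (1/3:ℝ)*a2*a2 + (1/2:ℝ)*a2*b2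 + (1/1:ℝ)*a2*c2 + (-2/3:ℝ)*a2*r + (-1/3:ℝ)*a2*s + (1/3:ℝ)*b2*b2 + (1/1:ℝ)*b2*c2 + (-2/3:ℝ)*b2*r + (-1/2:ℝ)*b2*s + (1/1:ℝ)*c2*c2 + (-1/1:ℝ)*c2*r + (-2/3:ℝ)*c2*s + (29/45:ℝ)*r*r + (1/1:ℝ)*r*s + (29/45:ℝ)*s*s) := by
  nlinarith [mul_nonneg (by norm_num : (0:ℝ) ≤ (5/2:ℝ)) (sq_nonneg ((1/1:ℝ)*a1 + (4/5:ℝ)*b1 + (8/5:ℝ)*c1 + (7/10:ℝ)*r + (1/1:ℝ)*s)),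
    mul_nonneg (by norm_num : (0:ℝ) ≤ (9/10:ℝ)) (sq_nonneg ((1/1:ℝ)*b1 + (8/9:ℝ)*c1 + (-1/6:ℝ)*r + (5/9:ℝ)*s)),
    mul_nonneg (by norm_num : (0:ℝ) ≤ (8/9:ℝ)) (sq_nonneg ((1/1:ℝ)*c1 + (-3/16:ℝ)*r + (-1/2:ℝ)*s)),
    mul_nonneg (by norm_num : (0:ℝ) ≤ (5/2:ℝ)) (sq_nonneg ((1/1:ℝ)*a2 + (4/5:ℝ)*b2 + (8/5:ℝ)*c2 + (-1/1:ℝ)*r + (-1/2:ℝ)*s)),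
    mul_nonneg (by norm_num : (0:ℝ) ≤ (9/10:ℝ)) (sq_nonneg ((1/1:ℝ)*b2 + (8/9:ℝ)*c2 + (-5/9:ℝ)*r + (-5/6:ℝ)*s)),
    mul_nonneg (by norm_num : (0:ℝ) ≤ (8/9:ℝ)) (sq_nonneg ((1/1:ℝ)*c2 + (1/2:ℝ)*r + (3/16:ℝ)*s)),
    mul_nonneg (by norm_num : (0:ℝ) ≤ (3/160:ℝ)) (sq_nonneg ((1/1:ℝ)*r)),
    mul_nonneg (by norm_num : (0:ℝ) ≤ (3/160:ℝ)) (sq_nonneg ((1/1:ℝ)*s))]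


lemma bigInt (a1 b1 c1 a2 b2 c2 r s da1 db1 dc1 da2 db2 dc2 dr ds : ℝ) :
    (∫ x in (0:ℝ)..1, ∫ y in (0:ℝ)..1, ((a1*x+b1*y+c1+r*x^2+2*s*x*y)^2 + (a2*x+b2*y+c2-2*r*x*y-s*y^2)^2 + (da1*x+db1*y+dc1+dr*x^2+2*ds*x*y)^2 + (da2*x+db2*y+dc2-2*dr*x*y-ds*y^2)^2))
      = (1/3:ℝ)*a1*a1 + (1/2:ℝ)*a1*b1 + (1/1:ℝ)*a1*c1 + (1/2:ℝ)*a1*r + (2/3:ℝ)*a1*s + (1/3:ℝ)*a2*a2 + (1/2:ℝ)*a2*b2 + (1/1:ℝ)*a2*c2 + (-2/3:ℝ)*a2*r + (-1/3:ℝ)*a2*s + (1/3:ℝ)*b1*b1 + (1/1:ℝ)*b1*c1 + (1/3:ℝ)*b1*r + (2/3:ℝ)*b1*s + (1/3:ℝ)*b2*b2 + (1/1:ℝ)*b2*c2 + (-2/3:ℝ)*b2*r + (-1/2:ℝ)*b2*s + (1/1:ℝ)*c1*c1 + (2/3:ℝ)*c1*r + (1/1:ℝ)*c1*s + (1/1:ℝ)*c2*c2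 + (-1/1:ℝ)*c2*r + (-2/3:ℝ)*c2*s + (1/3:ℝ)*da1*da1 + (1/2:ℝ)*da1*db1 + (1/1:ℝ)*da1*dc1 + (1/2:ℝ)*da1*dr + (2/3:ℝ)*da1*ds + (1/3:ℝ)*da2*da2 + (1/2:ℝ)*da2*db2 + (1/1:ℝ)*da2*dc2 + (-2/3:ℝ)*da2*dr + (-1/3:ℝ)*da2*ds + (1/3:ℝ)*db1*db1 + (1/1:ℝ)*db1*dc1 + (1/3:ℝ)*db1*dr + (2/3:ℝ)*db1*ds + (1/3:ℝ)*db2*db2 + (1/1:ℝ)*db2*dc2 + (-2/3:ℝ)*db2*dr + (-1/2:ℝ)*db2*ds + (1/1:ℝ)*dc1*dc1 + (2/3:ℝ)*dc1*dr + (1/1:ℝ)*dc1*ds + (1/1:ℝ)*dc2*dc2 + (-1/1:ℝ)*dc2*dr + (-2/3:ℝ)*dc2*ds + (29/45:ℝ)*dr*dr + (1/1:ℝ)*dr*ds + (29/45:ℝ)*ds*ds + (29/45:ℝ)*r*r + (1/1:ℝ)*r*s + (29/45:ℝ)*s*s := by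
  have hin : ∀ x : ℝ, (∫ y in (0:ℝ)..1, ((a1*x+b1*y+c1+r*x^2+2*s*x*y)^2 + (a2*x+b2*y+c2-2*r*x*y-s*y^2)^2 + (da1*x+db1*y+dc1+dr*x^2+2*ds*x*y)^2 + (da2*x+db2*y+dc2-2*dr*x*y-ds*y^2)^2))
      = ((1/3:ℝ)*b1*b1 + (1/1:ℝ)*b1*c1 + (1/3:ℝ)*b2*b2 + (1/1:ℝ)*b2*c2 + (-1/2:ℝ)*b2*s + (1/1:ℝ)*c1*c1 + (1/1:ℝ)*c2*c2 + (-2/3:ℝ)*c2*s + (1/3:ℝ)*db1*db1 + (1/1:ℝ)*db1*dc1 + (1/3:ℝ)*db2*db2 + (1/1:ℝ)*db2*dc2 + (-1/2:ℝ)*db2*ds + (1/1:ℝ)*dc1*dc1 + (1/1:ℝ)*dc2*dc2 + (-2/3:ℝ)*dc2*ds + (1/5:ℝ)*ds*ds + (1/5:ℝ)*s*s) + ((1/1:ℝ)*a1*b1 + (2/1:ℝ)*a1*c1 + (1/1:ℝ)*a2*b2 + (2/1:ℝ)*a2*c2 + (-2/3:ℝ)*a2*s + (4/3:ℝ)*b1*s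 + (-4/3:ℝ)*b2*r + (2/1:ℝ)*c1*s + (-2/1:ℝ)*c2*r + (1/1:ℝ)*da1*db1 + (2/1:ℝ)*da1*dc1 + (1/1:ℝ)*da2*db2 + (2/1:ℝ)*da2*dc2 + (-2/3:ℝ)*da2*ds + (4/3:ℝ)*db1*ds + (-4/3:ℝ)*db2*dr + (2/1:ℝ)*dc1*ds + (-2/1:ℝ)*dc2*dr + (1/1:ℝ)*dr*ds + (1/1:ℝ)*r*s)*x + ((1/1:ℝ)*a1*a1 + (2/1:ℝ)*a1*s + (1/1:ℝ)*a2*a2 + (-2/1:ℝ)*a2*r + (1/1:ℝ)*b1*r + (2/1:ℝ)*c1*r + (1/1:ℝ)*da1*da1 + (2/1:ℝ)*da1*ds + (1/1:ℝ)*da2*da2 + (-2/1:ℝ)*da2*dr + (1/1:ℝ)*db1*dr + (2/1:ℝ)*dc1*dr + (4/3:ℝ)*dr*dr + (4/3:ℝ)*ds*ds + (4/3:ℝ)*r*r + (4/3:ℝ)*s*s)*x^2 + ((2/1:ℝ)*a1*r + (2/1:ℝ)*da1*dr + (2/1:ℝ)*dr*ds + (2/1:ℝ)*r*s)*x^3 +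 ((1/1:ℝ)*dr*dr + (1/1:ℝ)*r*r)*x^4 := by
    intro x
    have h1 : (∫ y in (0:ℝ)..1, ((a1*x+b1*y+c1+r*x^2+2*s*x*y)^2 + (a2*x+b2*y+c2-2*r*x*y-s*y^2)^2 + (da1*x+db1*y+dc1+dr*x^2+2*ds*x*y)^2 + (da2*x+db2*y+dc2-2*dr*x*y-ds*y^2)^2))
        = ∫ y in (0:ℝ)..1, (((1/1:ℝ)*c1*c1 + (1/1:ℝ)*c2*c2 + (1/1:ℝ)*dc1*dc1 + (1/1:ℝ)*dc2*dc2 + (2/1:ℝ)*a1*c1*x + (2/1:ℝ)*a2*c2*x + (2/1:ℝ)*da1*dc1*x + (2/1:ℝ)*da2*dc2*x + (1/1:ℝ)*a1*a1*x^2 + (1/1:ℝ)*a2*a2*x^2 + (2/1:ℝ)*c1*r*x^2 + (1/1:ℝ)*da1*da1*x^2 + (1/1:ℝ)*da2*da2*x^2 + (2/1:ℝ)*dc1*dr*x^2 + (2/1:ℝ)*a1*r*x^3 + (2/1:ℝ)*da1*dr*x^3 + (1/1:ℝ)*dr*dr*x^4 + (1/1:ℝ)*r*r*x^4) + ((2/1:ℝ)*b1*c1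 + (2/1:ℝ)*b2*c2 + (2/1:ℝ)*db1*dc1 + (2/1:ℝ)*db2*dc2 + (2/1:ℝ)*a1*b1*x + (2/1:ℝ)*a2*b2*x + (4/1:ℝ)*c1*s*x + (-4/1:ℝ)*c2*r*x + (2/1:ℝ)*da1*db1*x + (2/1:ℝ)*da2*db2*x + (4/1:ℝ)*dc1*ds*x + (-4/1:ℝ)*dc2*dr*x + (4/1:ℝ)*a1*s*x^2 + (-4/1:ℝ)*a2*r*x^2 + (2/1:ℝ)*b1*r*x^2 + (4/1:ℝ)*da1*ds*x^2 + (-4/1:ℝ)*da2*dr*x^2 + (2/1:ℝ)*db1*dr*x^2 + (4/1:ℝ)*dr*ds*x^3 + (4/1:ℝ)*r*s*x^3)*y + ((1/1:ℝ)*b1*b1 + (1/1:ℝ)*b2*b2 + (-2/1:ℝ)*c2*s + (1/1:ℝ)*db1*db1 + (1/1:ℝ)*db2*db2 + (-2/1:ℝ)*dc2*ds + (-2/1:ℝ)*a2*s*x + (4/1:ℝ)*b1*s*x + (-4/1:ℝ)*b2*r*x + (-2/1:ℝ)*da2*ds*x + (4/1:ℝ)*db1*ds*x + (-4/1:ℝ)*db2*dr*x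 + (4/1:ℝ)*dr*dr*x^2 + (4/1:ℝ)*ds*ds*x^2 + (4/1:ℝ)*r*r*x^2 + (4/1:ℝ)*s*s*x^2)*y^2 + ((-2/1:ℝ)*b2*s + (-2/1:ℝ)*db2*ds + (4/1:ℝ)*dr*ds*x + (4/1:ℝ)*r*s*x)*y^3 + ((1/1:ℝ)*ds*ds + (1/1:ℝ)*s*s)*y^4) :=
      intervalIntegral.integral_congr (fun y _ => by ring)
    rw [h1, polyint]
    ring
  simp only [hin]
  rw [polyint]
  ring

/-- The vertex (trapezoidal) quadrature norm is equivalent to the L²(Ê) norm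
on the space X̂(Ê) of matrix fields with BDM₁ rows. -/
theorem stmt1 : ∃ α0 α1 : ℝ, 0 < α0 ∧ α0 ≤ α1 ∧
    ∀ τ : ℝ → ℝ → Matrix (Fin 2) (Fin 2) ℝ,
      (∀ i : Fin 2, BDM1 (fun x y => (τ x y i 0, τ x y i 1))) →
      α0 * (∫ x in (0:ℝ)..1, ∫ y in (0:ℝ)..1, frobSq (τ x y)) ≤
          (1/4) * (frobSq (τ 0 0) + frobSq (τ 1 0) + frobSq (τ 1 1) + frobSq (τ 0 1)) ∧
        (1/4) * (frobSq (τ 0 0) + frobSq (τ 1 0) + frobSq (τ 1 1) + frobSq (τ 0 1)) ≤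
          α1 * (∫ x in (0:ℝ)..1, ∫ y in (0:ℝ)..1, frobSq (τ x y)) := by
  refine ⟨1/2, 9, by norm_num, by norm_num, fun τ h => ?_⟩
  obtain ⟨a1, b1, c1, a2, b2, c2, r, s, h0⟩ := h 0
  obtain ⟨da1, db1, dc1, da2, db2, dc2, dr, ds, h1⟩ := h 1
  have h00 : ∀ x y : ℝ, τ x y 0 0 = a1*x+b1*y+c1+r*x^2+2*s*x*y := by
    intro x y; have := congrArg Prod.fst (h0 x y); simpa using this
  have h01 : ∀ x y : ℝ, τ x y 0 1 = a2*x+b2*y+c2-2*r*x*y-s*y^2 := by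
    intro x y; have := congrArg Prod.snd (h0 x y); simpa using this
  have h10 : ∀ x y : ℝ, τ x y 1 0 = da1*x+db1*y+dc1+dr*x^2+2*ds*x*y := by
    intro x y; have := congrArg Prod.fst (h1 x y); simpa using this
  have h11 : ∀ x y : ℝ, τ x y 1 1 = da2*x+db2*y+dc2-2*dr*x*y-ds*y^2 := by
    intro x y; have := congrArg Prod.snd (h1 x y); simpa using this
  have hfrob : ∀ x y : ℝ, frobSq (τ x y) = ((a1*x+b1*y+c1+r*x^2+2*s*x*y)^2 + (a2*x+b2*y+c2-2*r*x*y-s*y^2)^2 + (da1*x+db1*y+dc1+dr*x^2+2*ds*x*y)^2 + (da2*x+db2*y+dc2-2*dr*x*y-ds*y^2)^2) := by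
    intro x y
    simp only [frobSq, Fin.sum_univ_two]
    rw [h00 x y, h01 x y, h10 x y, h11 x y]
    ring
  have hI : (∫ x in (0:ℝ)..1, ∫ y in (0:ℝ)..1, frobSq (τ x y))
      = (1/3:ℝ)*a1*a1 + (1/2:ℝ)*a1*b1 + (1/1:ℝ)*a1*c1 + (1/2:ℝ)*a1*r + (2/3:ℝ)*a1*s + (1/3:ℝ)*a2*a2 + (1/2:ℝ)*a2*b2 + (1/1:ℝ)*a2*c2 + (-2/3:ℝ)*a2*r + (-1/3:ℝ)*a2*s + (1/3:ℝ)*b1*b1 + (1/1:ℝ)*b1*c1 + (1/3:ℝ)*b1*r + (2/3:ℝ)*b1*s + (1/3:ℝ)*b2*b2 + (1/1:ℝ)*b2*c2 + (-2/3:ℝ)*b2*r + (-1/2:ℝ)*b2*s + (1/1:ℝ)*c1*c1 + (2/3:ℝ)*c1*r + (1/1:ℝ)*c1*s + (1/1:ℝ)*c2*c2 + (-1/1:ℝ)*c2*r + (-2/3:ℝ)*c2*s + (1/3:ℝ)*da1*da1 + (1/2:ℝ)*da1*db1 + (1/1:ℝ)*da1*dc1 + (1/2:ℝ)*da1*dr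 + (2/3:ℝ)*da1*ds + (1/3:ℝ)*da2*da2 + (1/2:ℝ)*da2*db2 + (1/1:ℝ)*da2*dc2 + (-2/3:ℝ)*da2*dr + (-1/3:ℝ)*da2*ds + (1/3:ℝ)*db1*db1 + (1/1:ℝ)*db1*dc1 + (1/3:ℝ)*db1*dr + (2/3:ℝ)*db1*ds + (1/3:ℝ)*db2*db2 + (1/1:ℝ)*db2*dc2 + (-2/3:ℝ)*db2*dr + (-1/2:ℝ)*db2*ds + (1/1:ℝ)*dc1*dc1 + (2/3:ℝ)*dc1*dr + (1/1:ℝ)*dc1*ds + (1/1:ℝ)*dc2*dc2 + (-1/1:ℝ)*dc2*dr + (-2/3:ℝ)*dc2*ds + (29/45:ℝ)*dr*dr + (1/1:ℝ)*dr*ds + (29/45:ℝ)*ds*ds + (29/45:ℝ)*r*r + (1/1:ℝ)*r*s + (29/45:ℝ)*s*s := by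
    simp only [hfrob]
    exact bigInt a1 b1 c1 a2 b2 c2 r s da1 db1 dc1 da2 db2 dc2 dr ds
  rw [hI, hfrob 0 0, hfrob 1 0, hfrob 1 1, hfrob 0 1]
  have L1 := lower8 a1 b1 c1 a2 b2 c2 r s
  have L2 := lower8 da1 db1 dc1 da2 db2 dc2 dr ds
  have U1 := upper8 a1 b1 c1 a2 b2 c2 r s
  have U2 := upper8 da1 db1 dc1 da2 db2 dc2 dr ds
  constructor
  · linarith [L1, L2]
  · linarith [U1, U2]
end

section
/- Let x₁, x₂, x₃, x₄, y₁, y₂, y₃, y₄ ∈ ℝ satisfy y₁ = y₂, x₁ ≠ x₂, x₃ ≠ x₄, y₁ ≠ y₄, and y₂ ≠ y₃. If w₁, w₂, w₃, w₄ ∈ ℝ satisfy the six equations (x₂−x₁)w₂ + (x₄−x₃)w₃ = 0, (x₂−x₃)w₂ + (x₃−x₂)w₃ = 0, (y₂−y₃)w₃ + (y₄−y₁)w₄ = 0, (y₃−y₄)w₃ + (y₄−y₃)w₄ = 0, (x₂−x₁)w₁ + (x₄−x₃)w₄ = 0, and (x₁−x₄)w₁ + (x₄−x₁)w₄ = 0,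 then w₁ = w₂ = w₃ = w₄. -/
/-- Algebraic core of the kernel lemma for the quadrature divergence bilinear
form on a quadrilateral with a horizontal edge r₁r₂: any bilinear rotation `w`
annihilating the tangential and normal edge velocity basis functions of the
edges r₂r₃, r₃r₄, r₄r₁ is constant. -/
theorem stmt10 (x1 x2 x3 x4 y1 y2 y3 y4 w1 w2 w3 w4 : ℝ)
    (hy12 : y1 = y2) (hx12 : x1 ≠ x2) (hx34 : x3 ≠ x4)
    (hy14 : y1 ≠ y4) (hy23 : y2 ≠ y3)
    (e1 : (x2 - x1) * w2 + (x4 - x3) * w3 = 0)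
    (e2 : (x2 - x3) * w2 + (x3 - x2) * w3 = 0)
    (e3 : (y2 - y3) * w3 + (y4 - y1) * w4 = 0)
    (e4 : (y3 - y4) * w3 + (y4 - y3) * w4 = 0)
    (e5 : (x2 - x1) * w1 + (x4 - x3) * w4 = 0)
    (e6 : (x1 - x4) * w1 + (x4 - x1) * w4 = 0) :
    w1 = w2 ∧ w2 = w3 ∧ w3 = w4 := by
  have hx12' : x2 - x1 ≠ 0 := sub_ne_zero.mpr (Ne.symm hx12)
  have h34 : w3 = w4 := by
    rcases eq_or_ne y3 y4 with h | h
    · have h0 : (y2 - y3) * (w3 - w4) = 0 := by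
        rw [hy12] at e3; rw [h] at e3 ⊢; ring_nf; linarith [e3]
      rcases mul_eq_zero.mp h0 with h1 | h1
      · exact absurd (sub_eq_zero.mp h1) hy23
      · exact sub_eq_zero.mp h1
    · have h0 : (y3 - y4) * (w3 - w4) = 0 := by linarith [e4]
      rcases mul_eq_zero.mp h0 with h1 | h1
      · exact absurd (sub_eq_zero.mp h1) h
      · exact sub_eq_zero.mp h1
  subst h34
  rcases eq_or_ne x2 x3 with hc | hc
  · -- x2 = x3 : e1 - e5 gives w1 = w2
    subst hc
    have h12 : w1 = w2 := by
      have : (x2 - x1) * (w1 - w2) = 0 := by linarith [e1, e5]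
      rcases mul_eq_zero.mp this with h1 | h1
      · exact absurd h1 hx12'
      · exact sub_eq_zero.mp h1
    rcases eq_or_ne x1 x4 with hd | hd
    · subst hd
      have h2 : w2 = w3 := by
        have : (x2 - x1) * (w2 - w3) = 0 := by linarith [e1]
        rcases mul_eq_zero.mp this with h1 | h1
        · exact absurd h1 hx12'
        · exact sub_eq_zero.mp h1
      exact ⟨h12, h2, rfl⟩
    · have h1 : w1 = w3 := by
        have : (x1 - x4) * (w1 - w3) = 0 := by linarith [e6]
        rcases mul_eq_zero.mp this with h1 | h1
        · exact absurd (sub_eq_zero.mp h1) hd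
        · exact sub_eq_zero.mp h1
      exact ⟨h12, by rw [← h12, h1], rfl⟩
  · -- x2 ≠ x3 : e2 gives w2 = w3
    have h2 : w2 = w3 := by
      have : (x2 - x3) * (w2 - w3) = 0 := by linarith [e2]
      rcases mul_eq_zero.mp this with h1 | h1
      · exact absurd (sub_eq_zero.mp h1) hc
      · exact sub_eq_zero.mp h1
    rcases eq_or_ne x1 x4 with hd | hd
    · -- x1 = x4 : e1 gives (x2-x1+x4-x3)w3 = 0, i.e. (x2-x3)w3 = 0 ⇒ w3 = 0
      have hz : w3 = 0 := by
        have : (x2 - x3) * w3 = 0 := by rw [← hd] at e1; linarith [e1, h2.symm ▸ e1]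
        rcases mul_eq_zero.mp this with h1 | h1
        · exact absurd (sub_eq_zero.mp h1) hc
        · exact h1
      have h1 : w1 = 0 := by
        have : (x2 - x1) * w1 = 0 := by rw [hz] at e5; linarith [e5]
        rcases mul_eq_zero.mp this with h1 | h1
        · exact absurd h1 hx12'
        · exact h1
      exact ⟨by rw [h1, h2, hz], by rw [h2], rfl⟩
    · -- x1 ≠ x4 : e6 gives w1 = w3
      have h1 : w1 = w3 := by
        have : (x1 - x4) * (w1 - w3) = 0 := by linarith [e6]
        rcases mul_eq_zero.mp this with h1 | h1
        · exact absurd (sub_eq_zero.mp h1) hd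
        · exact sub_eq_zero.mp h1
      exact ⟨by rw [h1, h2], by rw [h2], rfl⟩
end

section
/- Let x₁, x₂, x₃, x₄, y₁, y₂, y₃, y₄ ∈ ℝ satisfy y₁ = y₂, x₁ ≠ x₂, x₃ ≠ x₄, y₁ ≠ y₄, and y₂ ≠ y₃, and suppose the quadrilateral is not a parallelogram, i.e. (x₂−x₁, y₂−y₁) ≠ (x₃−x₄, y₃−y₄). If w₁, w₂, w₃, w₄ ∈ ℝ satisfy the eight equations (y₄−y₁)w₁ + (y₂−y₃)w₂ = 0, (y₁−y₂)w₁ + (y₂−y₁)w₂ = 0, (x₂−x₁)w₂ + (x₄−x₃)w₃ = 0, (x₂−x₃)w₂ + (x₃−x₂)w₃ = 0, (y₂−y₃)w₃ + (y₄−y₁)w₄ = 0, (y₃−y₄)w₃ + (y₄−y₃)w₄ = 0, (x₂−x₁)w₁ + (x₄−x₃)w₄ = 0, and (x₁−x₄)w₁ + (x₄−x₁)w₄ = 0, then w₁ = w₂ = w₃ = w₄ = 0. -/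
/-- Algebraic core of the kernel lemma for the quadrature divergence bilinear
form on a non-parallelogram quadrilateral with a horizontal edge r₁r₂: any
bilinear rotation `w` annihilating the tangential and normal edge velocity
basis functions of all four edges is zero. -/
theorem stmt11 (x1 x2 x3 x4 y1 y2 y3 y4 w1 w2 w3 w4 : ℝ)
    (hy12 : y1 = y2) (hx12 : x1 ≠ x2) (hx34 : x3 ≠ x4)
    (hy14 : y1 ≠ y4) (hy23 : y2 ≠ y3)
    (hpar : (x2 - x1, y2 - y1) ≠ (x3 - x4, y3 - y4))
    (e1 : (y4 - y1) * w1 + (y2 - y3) * w2 = 0)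
    (e2 : (y1 - y2) * w1 + (y2 - y1) * w2 = 0)
    (e3 : (x2 - x1) * w2 + (x4 - x3) * w3 = 0)
    (e4 : (x2 - x3) * w2 + (x3 - x2) * w3 = 0)
    (e5 : (y2 - y3) * w3 + (y4 - y1) * w4 = 0)
    (e6 : (y3 - y4) * w3 + (y4 - y3) * w4 = 0)
    (e7 : (x2 - x1) * w1 + (x4 - x3) * w4 = 0)
    (e8 : (x1 - x4) * w1 + (x4 - x1) * w4 = 0) :
    w1 = 0 ∧ w2 = 0 ∧ w3 = 0 ∧ w4 = 0 := by
  subst hy12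
  have ha : y4 - y1 ≠ 0 := sub_ne_zero.mpr (Ne.symm hy14)
  have hb : y1 - y3 ≠ 0 := sub_ne_zero.mpr hy23
  have hc : x2 - x1 ≠ 0 := sub_ne_zero.mpr (Ne.symm hx12)
  by_cases h34 : y3 = y4
  · -- y3 = y4 : degenerate, use x-equations
    subst h34
    have hw12 : w1 = w2 := by
      have h : (y3 - y1) * (w1 - w2) = 0 := by linear_combination e1
      rcases mul_eq_zero.mp h with h | h
      · exact absurd h ha
      · linarith
    have hw34 : w3 = w4 := by
      have h : (y3 - y1) * (w4 - w3) = 0 := by linear_combination e5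
      rcases mul_eq_zero.mp h with h | h
      · exact absurd h ha
      · linarith
    have hpar' : x2 - x1 ≠ x3 - x4 := by
      intro h; exact hpar (by simp [h])
    have hw14 : w1 = w4 := by
      by_contra hne
      have hx14 : x1 = x4 := by
        have h : (x1 - x4) * (w1 - w4) = 0 := by linear_combination e8
        rcases mul_eq_zero.mp h with h | h
        · linarith [sub_eq_zero.mp h]
        · exact absurd (by linarith [sub_eq_zero.mp h] : w1 = w4) hne
      have hx23 : x2 = x3 := by
        have h : (x2 - x3) * (w2 - w3) = 0 := by linear_combination e4
        rcases mul_eq_zero.mp h with h | h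
        · linarith [sub_eq_zero.mp h]
        · exact absurd (by linarith [sub_eq_zero.mp h] : w1 = w4) hne
      exact hpar' (by rw [hx14, hx23])
    have h : ((x2 - x1) + (x4 - x3)) * w1 = 0 := by linear_combination e7 + (x4 - x3) * hw14
    have hco : (x2 - x1) + (x4 - x3) ≠ 0 := by
      intro h0; exact hpar' (by linarith)
    have hw1 : w1 = 0 := by
      rcases mul_eq_zero.mp h with h | h
      · exact absurd h hco
      · exact h
    refine ⟨hw1, by linarith, by linarith, by linarith⟩
  · -- y3 ≠ y4
    have hd : y4 - y3 ≠ 0 := sub_ne_zero.mpr (Ne.symm h34)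
    have hw34 : w3 = w4 := by
      have h : (y3 - y4) * (w3 - w4) = 0 := by linear_combination e6
      rcases mul_eq_zero.mp h with h | h
      · exact absurd (by linarith : y4 - y3 = 0) hd
      · linarith
    have hw3 : w3 = 0 := by
      have h : (y4 - y3) * w3 = 0 := by linear_combination e5 + (y4 - y1) * hw34
      rcases mul_eq_zero.mp h with h | h
      · exact absurd h hd
      · exact h
    have hw4 : w4 = 0 := by linarith
    have hw2 : w2 = 0 := by
      have h : (x2 - x1) * w2 = 0 := by linear_combination e3 - (x4 - x3) * hw3
      rcases mul_eq_zero.mp h with h | h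
      · exact absurd h hc
      · exact h
    have hw1 : w1 = 0 := by
      have h : (y4 - y1) * w1 = 0 := by linear_combination e1 - (y1 - y3) * hw2
      rcases mul_eq_zero.mp h with h | h
      · exact absurd h ha
      · exact h
    exact ⟨hw1, hw2, hw3, hw4⟩
end

section
/- Let F(x,y) = a + x·b + y·c + xy·d with a, b, c, d ∈ ℝ² (a bilinear map of the reference square), and let q : ℝ² → ℝ² be a vector field both of whose components are bilinear polynomials (elements of Q₁). Then the scalar function (x,y) ↦ tr(Dq(x,y) · adj(DF(x,y))) is itself a bilinear polynomial in Q₁; consequently, by exactness of the trapezoidal rule for bilinear functions, ∫_Ê tr(Dq · adj(DF)) dx dy = (1/4)·Σ_{i=1}^4 tr(Dq(r̂ᵢ) · adj(DF(r̂ᵢ))). -/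
/-- Q₁: bilinear polynomials `w(x,y) = a + b x + c y + d x y`. -/
def Q1 (w : ℝ → ℝ → ℝ) : Prop :=
  ∃ a b c d : ℝ, ∀ x y : ℝ, w x y = a + b * x + c * y + d * x * y

/-- Jacobian matrix of a planar map `F : ℝ² → ℝ²`, via partial derivatives. -/
noncomputable def jac (F : ℝ × ℝ → ℝ × ℝ) (p : ℝ × ℝ) : Matrix (Fin 2) (Fin 2) ℝ :=
  !![deriv (fun x => (F (x, p.2)).1) p.1, deriv (fun y => (F (p.1, y)).1) p.2;
     deriv (fun x => (F (x, p.2)).2) p.1, deriv (fun y => (F (p.1, y)).2) p.2]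

lemma deriv_bilin (a b c d y : ℝ) (x : ℝ) :
    deriv (fun x : ℝ => a + b * x + c * y + d * x * y) x = b + d * y := by
  have h : (fun x : ℝ => a + b * x + c * y + d * x * y)
      = fun x : ℝ => (b + d * y) * x + (a + c * y) := by funext t; ring
  rw [h]
  have := (((hasDerivAt_id x).const_mul (b + d * y)).add_const (a + c * y))
  simpa using this.deriv

lemma int_lin (P Q : ℝ) : (∫ t in (0:ℝ)..1, (P + Q * t)) = P + Q / 2 := by
  rw [intervalIntegral.integral_add (g := fun t : ℝ => Q * t) intervalIntegrable_const
      ((continuous_const.mul (continuous_id')).intervalIntegrable 0 1),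
    intervalIntegral.integral_const_mul, integral_id]
  simp
  ring

/-- For a bilinear map `F(x,y) = a + x b + y c + xy d` and a vector field `q`
with bilinear (Q₁) components, the mapped divergence integrand
`(x,y) ↦ tr(Dq(x,y)·adj(DF(x,y)))` is itself a bilinear polynomial, hence the
trapezoidal rule computes its integral over Ê = [0,1]² exactly. -/
theorem stmt13 (a b c d : ℝ × ℝ) (q : ℝ × ℝ → ℝ × ℝ)
    (hq1 : Q1 fun x y => (q (x, y)).1) (hq2 : Q1 fun x y => (q (x, y)).2)
    (F : ℝ × ℝ → ℝ × ℝ)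
    (hF : ∀ p : ℝ × ℝ, F p = a + p.1 • b + p.2 • c + (p.1 * p.2) • d)
    (h : ℝ → ℝ → ℝ)
    (hh : ∀ x y : ℝ, h x y = Matrix.trace (jac q (x, y) * (jac F (x, y)).adjugate)) :
    Q1 h ∧
    (∫ x in (0:ℝ)..1, ∫ y in (0:ℝ)..1, h x y) =
      (1/4) * (h 0 0 + h 1 0 + h 1 1 + h 0 1) := by
  obtain ⟨a1, b1, c1, d1, h1⟩ := hq1
  obtain ⟨a2, b2, c2, d2, h2⟩ := hq2
  have hq1x : ∀ x y : ℝ, deriv (fun t => (q (t, y)).1) x = b1 + d1 * y := by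
    intro x y
    have e : (fun t => (q (t, y)).1) = fun t => a1 + b1 * t + c1 * y + d1 * t * y :=
      funext fun t => h1 t y
    rw [e, deriv_bilin]
  have hq1y : ∀ x y : ℝ, deriv (fun t => (q (x, t)).1) y = c1 + d1 * x := by
    intro x y
    have e : (fun t => (q (x, t)).1) = fun t => a1 + c1 * t + b1 * x + d1 * t * x := by
      funext t; exact (h1 x t).trans (by ring)
    rw [e, deriv_bilin]
  have hq2x : ∀ x y : ℝ, deriv (fun t => (q (t, y)).2) x = b2 + d2 * y := by
    intro x y
    have e : (fun t => (q (t, y)).2) = fun t => a2 + b2 * t + c2 * y + d2 * t * y :=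
      funext fun t => h2 t y
    rw [e, deriv_bilin]
  have hq2y : ∀ x y : ℝ, deriv (fun t => (q (x, t)).2) y = c2 + d2 * x := by
    intro x y
    have e : (fun t => (q (x, t)).2) = fun t => a2 + c2 * t + b2 * x + d2 * t * x := by
      funext t; exact (h2 x t).trans (by ring)
    rw [e, deriv_bilin]
  have hF1 : ∀ p : ℝ × ℝ, (F p).1 = a.1 + b.1 * p.1 + c.1 * p.2 + d.1 * p.1 * p.2 := by
    intro p; rw [hF]; simp [Prod.fst_add]; ring
  have hF2 : ∀ p : ℝ × ℝ, (F p).2 = a.2 + b.2 * p.1 + c.2 * p.2 + d.2 * p.1 * p.2 := by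
    intro p; rw [hF]; simp [Prod.snd_add]; ring
  have hFx1 : ∀ x y : ℝ, deriv (fun t => (F (t, y)).1) x = b.1 + d.1 * y := by
    intro x y
    have e : (fun t => (F (t, y)).1) = fun t => a.1 + b.1 * t + c.1 * y + d.1 * t * y :=
      funext fun t => hF1 (t, y)
    rw [e, deriv_bilin]
  have hFy1 : ∀ x y : ℝ, deriv (fun t => (F (x, t)).1) y = c.1 + d.1 * x := by
    intro x y
    have e : (fun t => (F (x, t)).1) = fun t => a.1 + c.1 * t + b.1 * x + d.1 * t * x := by
      funext t; rw [hF1]; ring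
    rw [e, deriv_bilin]
  have hFx2 : ∀ x y : ℝ, deriv (fun t => (F (t, y)).2) x = b.2 + d.2 * y := by
    intro x y
    have e : (fun t => (F (t, y)).2) = fun t => a.2 + b.2 * t + c.2 * y + d.2 * t * y :=
      funext fun t => hF2 (t, y)
    rw [e, deriv_bilin]
  have hFy2 : ∀ x y : ℝ, deriv (fun t => (F (x, t)).2) y = c.2 + d.2 * x := by
    intro x y
    have e : (fun t => (F (x, t)).2) = fun t => a.2 + c.2 * t + b.2 * x + d.2 * t * x := by
      funext t; rw [hF2]; ring
    rw [e, deriv_bilin]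
  set A : ℝ := b1 * c.2 - c1 * b.2 - b2 * c.1 + c2 * b.1 with hA
  set B : ℝ := b1 * d.2 - d1 * b.2 - b2 * d.1 + d2 * b.1 with hB
  set C : ℝ := d1 * c.2 - c1 * d.2 - d2 * c.1 + c2 * d.1 with hC
  have hval : ∀ x y : ℝ, h x y = A + B * x + C * y := by
    intro x y
    rw [hh]
    simp only [jac]
    rw [hq1x, hq1y, hq2x, hq2y, hFx1, hFy1, hFx2, hFy2]
    simp [Matrix.adjugate_fin_two, Matrix.trace_fin_two, Matrix.mul_apply,
      Fin.sum_univ_two, hA, hB, hC]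
    ring
  constructor
  · exact ⟨A, B, C, 0, fun x y => by rw [hval]; ring⟩
  · have inner : ∀ x : ℝ, (∫ y in (0:ℝ)..1, h x y) = (A + C / 2) + B * x := by
      intro x
      simp only [hval]
      rw [int_lin]
      ring
    simp only [inner]
    rw [int_lin, hval, hval, hval, hval]
    ring
end

section
/- Let v ∈ BDM₁(Ê) and w ∈ RT₀(Ê), and suppose that v and w have equal edge fluxes over each of the four edges of the reference square, i.e. ∫₀¹ (v−w)(t,0)·(0,−1) dt = 0, ∫₀¹ (v−w)(1,t)·(1,0) dt = 0, ∫₀¹ (v−w)(t,1)·(0,1) dt = 0, and ∫₀¹ (v−w)(0,t)·(−1,0) dt = 0. Then the sums of vertex values agree: Σ_{i=1}^4 v(r̂ᵢ) = Σ_{i=1}^4 w(r̂ᵢ) in ℝ². Equivalently, the trapezoidal quadrature of (v − w) against any constant vector vanishes: (1/4)·Σ_{i=1}^4 (v−w)(r̂ᵢ)·c = 0 for every constant c ∈ ℝ². -/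
/-- The reference RT₀ space on Ê = [0,1]². -/
def RT0 (w : ℝ → ℝ → ℝ × ℝ) : Prop :=
  ∃ a1 b1 a2 b2 : ℝ, ∀ x y : ℝ, w x y = (a1 + b1 * x, a2 + b2 * y)

lemma poly_int (A B C : ℝ) :
    (∫ t in (0:ℝ)..1, (A + B * t + C * t ^ 2)) = A + B / 2 + C / 3 := by
  have h1 : IntervalIntegrable (fun t : ℝ => A + B * t) MeasureTheory.volume 0 1 := by
    apply Continuous.intervalIntegrable; continuity
  have h2 : IntervalIntegrable (fun t : ℝ => C * t ^ 2) MeasureTheory.volume 0 1 := by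
    apply Continuous.intervalIntegrable; continuity
  have h3 : IntervalIntegrable (fun t : ℝ => (A : ℝ)) MeasureTheory.volume 0 1 :=
    intervalIntegrable_const
  have h4 : IntervalIntegrable (fun t : ℝ => B * t) MeasureTheory.volume 0 1 := by
    apply Continuous.intervalIntegrable; continuity
  rw [show (fun t : ℝ => A + B * t + C * t ^ 2)
      = (fun t : ℝ => (A + B * t) + C * t ^ 2) from rfl,
    intervalIntegral.integral_add h1 h2, intervalIntegral.integral_add h3 h4,
    intervalIntegral.integral_const, intervalIntegral.integral_const_mul,
    intervalIntegral.integral_const_mul, integral_id, integral_pow]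
  norm_num
  ring

/-- If `v ∈ BDM₁(Ê)` and `w ∈ RT₀(Ê)` have equal edge fluxes on each of the four
edges of the reference square (i.e. `w` is the RT₀ interpolant of `v`), then the
sums of their vertex values agree; equivalently, the trapezoidal quadrature of
`v − w` against any constant vector vanishes. -/
theorem stmt15 (v w : ℝ → ℝ → ℝ × ℝ) (hv : BDM1 v) (hw : RT0 w)
    (e1 : (∫ t in (0:ℝ)..1, -((v t 0).2 - (w t 0).2)) = 0)
    (e2 : (∫ t in (0:ℝ)..1, ((v 1 t).1 - (w 1 t).1)) = 0)
    (e3 : (∫ t in (0:ℝ)..1, ((v t 1).2 - (w t 1).2)) = 0)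
    (e4 : (∫ t in (0:ℝ)..1, -((v 0 t).1 - (w 0 t).1)) = 0) :
    v 0 0 + v 1 0 + v 1 1 + v 0 1 = w 0 0 + w 1 0 + w 1 1 + w 0 1 ∧
    ∀ cc : ℝ × ℝ,
      (1/4) * (((v 0 0 - w 0 0).1 * cc.1 + (v 0 0 - w 0 0).2 * cc.2)
        + ((v 1 0 - w 1 0).1 * cc.1 + (v 1 0 - w 1 0).2 * cc.2)
        + ((v 1 1 - w 1 1).1 * cc.1 + (v 1 1 - w 1 1).2 * cc.2)
        + ((v 0 1 - w 0 1).1 * cc.1 + (v 0 1 - w 0 1).2 * cc.2)) = 0 := by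
  obtain ⟨a1, b1, c1, a2, b2, c2, r, s, hv⟩ := hv
  obtain ⟨p1, q1, p2, q2, hw⟩ := hw
  have mk : ∀ (A B C : ℝ) (f : ℝ → ℝ), (∀ t, f t = A + B * t + C * t ^ 2) →
      (∫ t in (0:ℝ)..1, f t) = A + B / 2 + C / 3 := by
    intro A B C f hf
    rw [show f = fun t => A + B * t + C * t ^ 2 from funext hf]
    exact poly_int A B C
  have E1 := mk (p2 - c2) (-a2) 0 (fun t => -((v t 0).2 - (w t 0).2))
    (fun t => by simp only [hv, hw]; ring)
  have E2 := mk (a1 + c1 + r - p1 - q1) (b1 + 2 * s) 0 (fun t => (v 1 t).1 - (w 1 t).1)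
    (fun t => by simp only [hv, hw]; ring)
  have E3 := mk (b2 + c2 - s - p2 - q2) (a2 - 2 * r) 0 (fun t => (v t 1).2 - (w t 1).2)
    (fun t => by simp only [hv, hw]; ring)
  have E4 := mk (p1 - c1) (-b1) 0 (fun t => -((v 0 t).1 - (w 0 t).1))
    (fun t => by simp only [hv, hw]; ring)
  rw [e1] at E1
  rw [e2] at E2
  rw [e3] at E3
  rw [e4] at E4
  have key : v 0 0 + v 1 0 + v 1 1 + v 0 1 = w 0 0 + w 1 0 + w 1 1 + w 0 1 := by
    simp only [hv, hw, Prod.mk_add_mk, Prod.mk.injEq]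
    constructor <;> [linarith; linarith]
  refine ⟨key, fun cc => ?_⟩
  have k1 := congrArg Prod.fst key
  have k2 := congrArg Prod.snd key
  simp only [Prod.fst_add, Prod.snd_add, Prod.fst_sub, Prod.snd_sub] at k1 k2 ⊢
  linear_combination (cc.1 / 4) * k1 + (cc.2 / 4) * k2
end
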